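/- arXiv:1602.00733 — 5 statements merged into one kernel-verified Lean document; each statement's English description precedes it below -/
import Mathlib

section
/- For all integers p, q, p', q' ≥ 2 with p ≤ p' and q < q', there is no contraction model of the complete bipartite graph K_{p,q} in the complete bipartite graph K_{p',q'}. -/
/-!
Every edge `xy` of `K_{p',q'}` dominates the graph: each vertex is adjacent to `x` or to `y`.
So a branch set with two vertices, which by connectivity contains an edge, would touch every
other branch set, whereas every vertex of `K_{p,q}` (`p, q ≥ 2`) has a non-neighbour. Hence all
branch sets are singletons, the model is a bijection of vertex sets, and `p + q = p' + q'`,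
contradicting `p ≤ p'`, `q < q'`.
-/

open SimpleGraph

/-- A contraction model of a graph `H` in a graph `G`: a map sending each vertex of `H`
to a connected subset of vertices of `G`, these subsets partitioning the vertices of `G`,
with distinct vertices of `H` adjacent iff the corresponding subsets are joined by an
edge of `G`. -/
def IsContractionModel {V W : Type*} (G : SimpleGraph V) (H : SimpleGraph W)
    (φ : W → Set V) : Prop :=
  (∀ w : W, (G.induce (φ w)).Connected) ∧
  (∀ v : V, ∃! w : W, v ∈ φ w) ∧
  ∀ w w' : W, w ≠ w' →
    (H.Adj w w' ↔ ∃ a ∈ φ w, ∃ b ∈ φ w', G.Adj a b)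

/-- `H` is a contraction of `G`: there is a contraction model of `H` in `G`
(equivalently, `H` can be obtained from `G` by a sequence of edge contractions). -/
def IsContraction {V W : Type*} (H : SimpleGraph W) (G : SimpleGraph V) : Prop :=
  ∃ φ : W → Set V, IsContractionModel G H φ

/-- The graph `D_r`: two adjacent vertices together with `r` further vertices,
each adjacent to exactly the first two. `D_2` is the diamond (`K₄` minus an edge). -/
def Dgraph (r : ℕ) : SimpleGraph (Fin 2 ⊕ Fin r) :=
  SimpleGraph.fromRel (fun x _ => x.isLeft)

/-- Finite graphs, with vertex set `Fin n` for some `n`. -/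
def FinGraph : Type := Σ n : ℕ, SimpleGraph (Fin n)

/-- The contraction relation on finite graphs. -/
def FinGraph.Contr (H G : FinGraph) : Prop := IsContraction H.2 G.2

/-- A set of finite graphs is well-quasi-ordered by the contraction relation if every
infinite sequence of its members contains two graphs, the earlier being a contraction
of the later. -/
def WqoByContraction (S : Set FinGraph) : Prop :=
  ∀ f : ℕ → FinGraph, (∀ k, f k ∈ S) → ∃ i j : ℕ, i < j ∧ FinGraph.Contr (f i) (f j)

namespace SimpleGraph

variable {V : Type*} {G : SimpleGraph V}

lemma Connected.exists_adj_of_induce_nontrivial {s : Set V} (hs : (G.induce s).Connected)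
    (hnt : s.Nontrivial) : ∃ x ∈ s, ∃ y ∈ s, G.Adj x y := by
  have : Nontrivial s := Set.nontrivial_coe_sort.mpr hnt
  obtain ⟨x⟩ := hs.nonempty
  obtain ⟨y, hxy⟩ := hs.preconnected.exists_adj_of_nontrivial x
  exact ⟨x, x.2, y, y.2, hxy⟩

variable {α β : Type*}

lemma completeBipartiteGraph_adj_or_adj_of_adj {x y : α ⊕ β}
    (hxy : (completeBipartiteGraph α β).Adj x y) (z : α ⊕ β) :
    (completeBipartiteGraph α β).Adj z x ∨ (completeBipartiteGraph α β).Adj z y := by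
  rcases x with _ | _ <;> rcases y with _ | _ <;> rcases z with _ | _ <;> simp_all

lemma completeBipartiteGraph_exists_ne_not_adj [Nontrivial α] [Nontrivial β] (w : α ⊕ β) :
    ∃ w' ≠ w, ¬ (completeBipartiteGraph α β).Adj w w' := by
  rcases w with a | b
  · obtain ⟨a', ha'⟩ := exists_ne a
    exact ⟨.inl a', by simpa using ha', by simp⟩
  · obtain ⟨b', hb'⟩ := exists_ne b
    exact ⟨.inr b', by simpa using hb', by simp⟩

end SimpleGraph

namespace IsContractionModel

variable {V W : Type*} {G : SimpleGraph V} {H : SimpleGraph W} {φ : W → Set V}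

lemma nonempty (hφ : IsContractionModel G H φ) (w : W) : (φ w).Nonempty := by
  obtain ⟨⟨x, hx⟩⟩ := (hφ.1 w).nonempty
  exact ⟨x, hx⟩

lemma subsingleton_of_dominating_edges (hφ : IsContractionModel G H φ)
    (hG : ∀ x y, G.Adj x y → ∀ z, G.Adj z x ∨ G.Adj z y)
    (hH : ∀ w, ∃ w' ≠ w, ¬ H.Adj w w') (w : W) : (φ w).Subsingleton := by
  by_contra hnt
  obtain ⟨x, hx, y, hy, hxy⟩ :=
    (hφ.1 w).exists_adj_of_induce_nontrivial (Set.not_subsingleton_iff.mp hnt)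
  obtain ⟨w', hw', hnadj⟩ := hH w
  obtain ⟨z, hz⟩ := hφ.nonempty w'
  refine hnadj ((hφ.2.2 w w' hw'.symm).mpr ?_)
  rcases hG x y hxy z with hzx | hzy
  · exact ⟨x, hx, z, hz, hzx.symm⟩
  · exact ⟨y, hy, z, hz, hzy.symm⟩

lemma card_eq_of_subsingleton (hφ : IsContractionModel G H φ)
    (hs : ∀ w, (φ w).Subsingleton) : Nat.card V = Nat.card W := by
  choose f hf hf_unique using hφ.2.1
  refine Nat.card_eq_of_bijective f ⟨fun x y hxy ↦ hs (f x) (hf x) (hxy ▸ hf y), fun w ↦ ?_⟩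
  obtain ⟨x, hx⟩ := hφ.nonempty w
  exact ⟨x, (hf_unique x w hx).symm⟩

end IsContractionModel

theorem no_model_completeBipartite_general (p q p' q' : ℕ)
    (hp : 2 ≤ p) (hq : 2 ≤ q)
    (hpp' : p ≤ p') (hqq' : q < q') :
    ∀ φ : (Fin p ⊕ Fin q) → Set (Fin p' ⊕ Fin q'),
      ¬ IsContractionModel (completeBipartiteGraph (Fin p') (Fin q'))
        (completeBipartiteGraph (Fin p) (Fin q)) φ := by
  intro φ hφ
  have : Nontrivial (Fin p) := Fin.nontrivial_iff_two_le.mpr hp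
  have : Nontrivial (Fin q) := Fin.nontrivial_iff_two_le.mpr hq
  have hsingle := hφ.subsingleton_of_dominating_edges
    (fun _ _ ↦ completeBipartiteGraph_adj_or_adj_of_adj) completeBipartiteGraph_exists_ne_not_adj
  have hcard := hφ.card_eq_of_subsingleton hsingle
  simp only [Nat.card_sum, Nat.card_fin] at hcard
  omega

/-- For all integers `p, q, p', q' ≥ 2` with `p ≤ p'` and `q < q'`,
there is no contraction model of `K_{p,q}` in `K_{p',q'}`. -/
theorem no_model_completeBipartite (p q p' q' : ℕ)
    (hp : 2 ≤ p) (hq : 2 ≤ q) (hp' : 2 ≤ p') (hq' : 2 ≤ q')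
    (hpp' : p ≤ p') (hqq' : q < q') :
    ∀ φ : (Fin p ⊕ Fin q) → Set (Fin p' ⊕ Fin q'),
      ¬ IsContractionModel (completeBipartiteGraph (Fin p') (Fin q'))
        (completeBipartiteGraph (Fin p) (Fin q)) φ :=
  no_model_completeBipartite_general p q p' q' hp hq hpp' hqq'
end

section
/- Let p ≥ 1 be an integer. For every edge e of the graph D_p, the graph obtained from D_p by contracting e is isomorphic either to D_{p-1} or to the star K_{1,p}. -/
open SimpleGraph

/-- The graph obtained from `G` by contracting the edge `{a, b}`: vertices `a` and `b`
are replaced by a single vertex (here represented by `a`) adjacent to all former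
neighbours of `a` and of `b`. -/
def contractEdge {V : Type*} (G : SimpleGraph V) (a b : V) :
    SimpleGraph {x : V // x ≠ b} :=
  SimpleGraph.fromRel (fun x y => G.Adj x.1 y.1 ∨ (x.1 = a ∧ G.Adj b y.1))

/-! `D_p` and `K_{1,p}` are complete split graphs: a clique, an independent set, and all edges
between the two. Contracting `{a, b}` in a complete split graph yields again a complete split
graph, whose clique is the old one without `b`, together with the merged vertex `a` if `b` was in
the clique. A complete split graph is determined up to isomorphism by its number of vertices and
the size of its clique. So contracting the edge inside the clique `{a, b}` of `D_p` leaves one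
clique vertex and `p` others (the star), and contracting any other edge leaves two clique
vertices and `p - 1` others. -/

lemma Fintype.card_subtype_isLeft (α β : Type*) [Fintype α] [Fintype β] :
    Fintype.card {x : α ⊕ β // x.isLeft} = Fintype.card α :=
  Fintype.card_congr Equiv.sumIsLeft

namespace SimpleGraph

variable {V W : Type*}

def completeSplitGraph (P : V → Prop) : SimpleGraph V :=
  fromRel fun x _ => P x

@[simp]
lemma completeSplitGraph_adj {P : V → Prop} {x y : V} :
    (completeSplitGraph P).Adj x y ↔ x ≠ y ∧ (P x ∨ P y) :=
  Iff.rfl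

lemma Dgraph_eq_completeSplitGraph (r : ℕ) :
    Dgraph r = completeSplitGraph fun x => x.isLeft :=
  rfl

lemma completeBipartiteGraph_eq_completeSplitGraph (α β : Type*) [Subsingleton α] :
    completeBipartiteGraph α β = completeSplitGraph fun x => x.isLeft := by
  ext x y
  rcases x with a | b <;> rcases y with a' | b' <;>
    simp [eq_iff_true_of_subsingleton]

lemma contractEdge_completeSplitGraph (P : V → Prop) (a b : V) :
    contractEdge (completeSplitGraph P) a b =
      completeSplitGraph fun x : {x // x ≠ b} => P x.1 ∨ (x.1 = a ∧ P b) := by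
  ext ⟨x, hx⟩ ⟨y, hy⟩
  simp only [contractEdge, fromRel_adj, completeSplitGraph_adj, ne_eq, Subtype.mk.injEq]
  grind

def Iso.completeSplitGraph {P : V → Prop} {Q : W → Prop} (e : V ≃ W)
    (he : ∀ x, Q (e x) ↔ P x) : completeSplitGraph P ≃g completeSplitGraph Q where
  toEquiv := e
  map_rel_iff' {x y} := by simp [he]

lemma completeSplitGraph_iso_of_card [Fintype V] [Fintype W] (P : V → Prop) (Q : W → Prop)
    [DecidablePred P] [DecidablePred Q] (hV : Fintype.card V = Fintype.card W)
    (hP : Fintype.card {x // P x} = Fintype.card {y // Q y}) :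
    Nonempty (completeSplitGraph P ≃g completeSplitGraph Q) := by
  have hnP : Fintype.card {x // ¬P x} = Fintype.card {y // ¬Q y} := by
    rw [Fintype.card_subtype_compl, Fintype.card_subtype_compl, hV, hP]
  let e : V ≃ W := (Equiv.sumCompl P).symm.trans
    (((Fintype.equivOfCardEq hP).sumCongr (Fintype.equivOfCardEq hnP)).trans (Equiv.sumCompl Q))
  refine ⟨Iso.completeSplitGraph e fun x => ?_⟩
  by_cases hx : P x
  · simpa [e, hx] using (Fintype.equivOfCardEq hP ⟨x, hx⟩).2
  · simpa [e, hx] using (Fintype.equivOfCardEq hnP ⟨x, hx⟩).2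

lemma card_contractEdge_clique [Fintype V] [DecidableEq V] (P : V → Prop) [DecidablePred P]
    (a b : V) :
    Fintype.card {x : {x // x ≠ b} // P x.1 ∨ (x.1 = a ∧ P b)} =
      if P a ∧ P b then Fintype.card {x // P x} - 1 else Fintype.card {x // P x} := by
  rw [Fintype.card_congr (Equiv.subtypeSubtypeEquivSubtypeInter (· ≠ b)
    (fun x => P x ∨ (x = a ∧ P b))), Fintype.card_subtype, Fintype.card_subtype]
  by_cases hb : P b
  · by_cases ha : P a
    · have hfilter : ({x | x ≠ b ∧ (P x ∨ x = a ∧ P b)} : Finset V) =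
          ({x | P x} : Finset V).erase b := by
        ext x
        simp only [Finset.mem_filter, Finset.mem_univ, true_and, Finset.mem_erase]
        grind
      rw [hfilter, Finset.card_erase_of_mem (by simpa using hb), if_pos ⟨ha, hb⟩]
    · have hfilter : ({x | x ≠ b ∧ (P x ∨ x = a ∧ P b)} : Finset V) =
          insert a (({x | P x} : Finset V).erase b) := by
        ext x
        simp only [Finset.mem_filter, Finset.mem_univ, true_and, Finset.mem_insert,
          Finset.mem_erase]
        grind
      rw [hfilter, Finset.card_insert_of_notMem (by simp [ha]),
        Finset.card_erase_of_mem (by simpa using hb), if_neg (by tauto)]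
      exact Nat.sub_add_cancel (Finset.card_pos.2 ⟨b, by simpa using hb⟩)
  · rw [if_neg (by tauto)]
    congr 1
    ext x
    simp only [Finset.mem_filter, Finset.mem_univ, true_and]
    grind

end SimpleGraph

open SimpleGraph in
theorem contractEdge_Dgraph_general (p : ℕ) (u v : Fin 2 ⊕ Fin p) :
    Nonempty (contractEdge (Dgraph p) u v ≃g Dgraph (p - 1)) ∨
    Nonempty (contractEdge (Dgraph p) u v ≃g completeBipartiteGraph (Fin 1) (Fin p)) := by
  have hV : Fintype.card {x // x ≠ v} = p + 1 := by
    rw [Fintype.card_subtype_compl, Fintype.card_subtype_eq, Fintype.card_sum]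
    simp only [Fintype.card_fin]
    omega
  have hclique := card_contractEdge_clique (fun x : Fin 2 ⊕ Fin p => x.isLeft) u v
  rw [Fintype.card_subtype_isLeft, Fintype.card_fin] at hclique
  rw [Dgraph_eq_completeSplitGraph, Dgraph_eq_completeSplitGraph,
    contractEdge_completeSplitGraph, completeBipartiteGraph_eq_completeSplitGraph]
  by_cases hleft : u.isLeft ∧ v.isLeft
  · right
    rw [if_pos hleft] at hclique
    refine completeSplitGraph_iso_of_card _ _ ?_ ?_
    · rw [hV, Fintype.card_sum, Fintype.card_fin, Fintype.card_fin, add_comm]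
    · rw [hclique, Fintype.card_subtype_isLeft, Fintype.card_fin]
  · left
    rw [if_neg hleft] at hclique
    have hp : 0 < p := by
      rcases u with _ | k
      · rcases v with _ | k
        · simp at hleft
        · exact k.pos
      · exact k.pos
    refine completeSplitGraph_iso_of_card _ _ ?_ ?_
    · rw [hV, Fintype.card_sum, Fintype.card_fin, Fintype.card_fin]
      omega
    · rw [hclique, Fintype.card_subtype_isLeft, Fintype.card_fin]

/-- Let `p ≥ 1`. For every edge `{u, v}` of `D_p`, the graph obtained
from `D_p` by contracting this edge is isomorphic either to `D_{p-1}` or to the star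
`K_{1,p}`. -/
theorem contractEdge_Dgraph (p : ℕ) (hp : 1 ≤ p) (u v : Fin 2 ⊕ Fin p)
    (huv : (Dgraph p).Adj u v) :
    Nonempty (contractEdge (Dgraph p) u v ≃g Dgraph (p - 1)) ∨
    Nonempty (contractEdge (Dgraph p) u v ≃g completeBipartiteGraph (Fin 1) (Fin p)) :=
  contractEdge_Dgraph_general p u v
end

section
/- Let G be a graph and let C be a (not necessarily induced) cycle in G. If C has at least one chord in G and at least one non-chord in G, then C has a chord {u,u'} and a non-chord {v,v'} that are crossing in C, i.e., u, v, u', v' are four distinct vertices appearing in this cyclic order along C. -/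
/-!
Suppose no chord crosses a non-chord, so that crossing diagonals of the cycle `0, 1, …, m - 1`
always have the same status. With positions sorted as `i < j`, the diagonal `{0, j}` crosses
`{1, m - 1}`, and a diagonal `{i, j}` with `0 < i` crosses `{0, i + 1}`, which in turn crosses
`{1, m - 1}`. Hence every diagonal has the status of `{1, m - 1}`, so chords and non-chords
cannot both exist.
-/

open SimpleGraph

namespace Fin

variable {m : ℕ}

def IsCycleDiagonal [NeZero m] (i j : Fin m) : Prop :=
  i ≠ j ∧ j ≠ i + 1 ∧ i ≠ j + 1

theorem IsCycleDiagonal.symm [NeZero m] {i j : Fin m} (h : IsCycleDiagonal i j) :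
    IsCycleDiagonal j i :=
  ⟨h.1.symm, h.2.2, h.2.1⟩

theorem IsCycleDiagonal.val_bounds [NeZero m] {i j : Fin m} (h : IsCycleDiagonal i j)
    (hij : i < j) : i.val + 2 ≤ j.val ∧ (0 < i.val ∨ j.val + 1 < m) := by
  obtain ⟨-, hji, hij'⟩ := h
  have hm : 1 < m := by omega
  simp only [ne_eq, Fin.ext_iff, Fin.val_add, Fin.val_one', Nat.one_mod_eq_one.2 hm.ne'] at hji hij'
  rw [Fin.lt_def] at hij
  have hi : i.val + 1 < m := by omega
  rw [Nat.mod_eq_of_lt hi] at hji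
  rcases Nat.lt_or_ge (j.val + 1) m with hj | hj
  · omega
  · rw [show j.val + 1 = m by omega, Nat.mod_self] at hij'
    omega

variable {P : Fin m → Fin m → Prop}

theorem iff_of_forall_crossing_iff
    (hP : ∀ a b c d : Fin m, a < b → b < c → c < d → (P a c ↔ P b d)) {i j i' j' : Fin m}
    (hij : i.val + 2 ≤ j.val) (hi : 0 < i.val ∨ j.val + 1 < m)
    (hij' : i'.val + 2 ≤ j'.val) (hi' : 0 < i'.val ∨ j'.val + 1 < m) :
    P i j ↔ P i' j' := by
  have hm : 4 ≤ m := by omega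
  let z : Fin m := ⟨0, by omega⟩
  let o : Fin m := ⟨1, by omega⟩
  let t : Fin m := ⟨m - 1, by omega⟩
  have iff_ref : ∀ i j : Fin m, i.val + 2 ≤ j.val → (0 < i.val ∨ j.val + 1 < m) →
      (P i j ↔ P o t) := by
    intro i j hij hi
    rcases Nat.eq_zero_or_pos i.val with hi0 | hi0
    · exact hP i o j t (Fin.lt_def.2 (by simp [o]; omega)) (Fin.lt_def.2 (by simp [o]; omega))
        (Fin.lt_def.2 (by simp [t]; omega))
    · let k : Fin m := ⟨i.val + 1, by omega⟩
      exact (hP z i k j (Fin.lt_def.2 (by simp [z]; omega)) (Fin.lt_def.2 (by simp [k]))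
          (Fin.lt_def.2 (by simp [k]; omega))).symm.trans
        (hP z o k t (Fin.lt_def.2 (by simp [z, o])) (Fin.lt_def.2 (by simp [o, k]; omega))
          (Fin.lt_def.2 (by simp [k, t]; omega)))
  exact (iff_ref i j hij hi).trans (iff_ref i' j' hij' hi').symm

theorem IsCycleDiagonal.iff [NeZero m] (hsymm : ∀ a b, P a b → P b a)
    (hP : ∀ a b c d : Fin m, a < b → b < c → c < d → (P a c ↔ P b d)) {i j i' j' : Fin m}
    (h : IsCycleDiagonal i j) (h' : IsCycleDiagonal i' j') : P i j ↔ P i' j' := by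
  have sorted : ∀ i j : Fin m, IsCycleDiagonal i j →
      ∃ a b : Fin m, a.val + 2 ≤ b.val ∧ (0 < a.val ∨ b.val + 1 < m) ∧ (P i j ↔ P a b) := by
    intro i j h
    rcases lt_or_gt_of_ne h.1 with hij | hji
    · exact ⟨i, j, (h.val_bounds hij).1, (h.val_bounds hij).2, Iff.rfl⟩
    · exact ⟨j, i, (h.symm.val_bounds hji).1, (h.symm.val_bounds hji).2,
        ⟨hsymm i j, hsymm j i⟩⟩
  obtain ⟨a, b, hab, ha, hPab⟩ := sorted i j h
  obtain ⟨a', b', hab', ha', hPab'⟩ := sorted i' j' h'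
  exact hPab.trans ((iff_of_forall_crossing_iff hP hab ha hab' ha').trans hPab'.symm)

end Fin

theorem crossing_chord_nonchord_general {V : Type*} (G : SimpleGraph V) (n : ℕ)
    (f : Fin (n + 3) → V)
    (hchord : ∃ i j : Fin (n + 3), i ≠ j ∧ j ≠ i + 1 ∧ i ≠ j + 1 ∧ G.Adj (f i) (f j))
    (hnonchord : ∃ i j : Fin (n + 3), i ≠ j ∧ j ≠ i + 1 ∧ i ≠ j + 1 ∧ ¬ G.Adj (f i) (f j)) :
    ∃ i₁ i₂ i₃ i₄ : Fin (n + 3), i₁ < i₂ ∧ i₂ < i₃ ∧ i₃ < i₄ ∧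
      ((G.Adj (f i₁) (f i₃) ∧ ¬ G.Adj (f i₂) (f i₄)) ∨
       (¬ G.Adj (f i₁) (f i₃) ∧ G.Adj (f i₂) (f i₄))) := by
  by_contra! hcross
  have hP : ∀ a b c d : Fin (n + 3), a < b → b < c → c < d →
      (G.Adj (f a) (f c) ↔ G.Adj (f b) (f d)) := by
    intro a b c d hab hbc hcd
    have := hcross a b c d hab hbc hcd
    tauto
  obtain ⟨i, j, hij, hji, hij', hadj⟩ := hchord
  obtain ⟨i', j', hij₂, hji₂, hij₂', hnadj⟩ := hnonchord
  exact hnadj ((Fin.IsCycleDiagonal.iff (fun _ _ h => h.symm) hP ⟨hij, hji, hij'⟩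
    ⟨hij₂, hji₂, hij₂'⟩).1 hadj)

/-- Let `C` be a (not necessarily induced) cycle in `G`, given by an
injective map `f : Fin (n+3) → V` with consecutive images adjacent (indices taken
cyclically). If `C` has at least one chord and at least one non-chord in `G`, then it
has a chord and a non-chord that are crossing in `C`: there are positions
`i₁ < i₂ < i₃ < i₄` such that one of the pairs `{f i₁, f i₃}`, `{f i₂, f i₄}` is a chord
and the other is a non-chord. -/
theorem crossing_chord_nonchord {V : Type*} [Fintype V] (G : SimpleGraph V) (n : ℕ)
    (f : Fin (n + 3) → V) (hinj : Function.Injective f)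
    (hcyc : ∀ i : Fin (n + 3), G.Adj (f i) (f (i + 1)))
    (hchord : ∃ i j : Fin (n + 3), i ≠ j ∧ j ≠ i + 1 ∧ i ≠ j + 1 ∧ G.Adj (f i) (f j))
    (hnonchord : ∃ i j : Fin (n + 3), i ≠ j ∧ j ≠ i + 1 ∧ i ≠ j + 1 ∧ ¬ G.Adj (f i) (f j)) :
    ∃ i₁ i₂ i₃ i₄ : Fin (n + 3), i₁ < i₂ ∧ i₂ < i₃ ∧ i₃ < i₄ ∧
      ((G.Adj (f i₁) (f i₃) ∧ ¬ G.Adj (f i₂) (f i₄)) ∨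
       (¬ G.Adj (f i₁) (f i₃) ∧ G.Adj (f i₂) (f i₄))) :=
  crossing_chord_nonchord_general G n f hchord hnonchord
end

section
/- Under the contraction relation, the class of all finite graphs has no canonical antichain: there is no antichain A of the contraction relation ⋖ such that for every ⋖-closed class F of graphs, F ∩ A is finite if and only if F is well-quasi-ordered by ⋖. -/
open SimpleGraph

/-- A class of finite graphs is closed under the contraction relation. -/
def ContrClosed (F : Set FinGraph) : Prop :=
  ∀ G ∈ F, ∀ H : FinGraph, FinGraph.Contr H G → H ∈ F

/-- An antichain of the contraction relation: a set of pairwise incomparable graphs. -/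
def ContrAntichain (A : Set FinGraph) : Prop :=
  ∀ a ∈ A, ∀ b ∈ A, a ≠ b → ¬ FinGraph.Contr a b

/-!
Edgeless graphs admit only the trivial contraction, so if infinitely many of them are missing
from `A`, those missing ones form a contraction-closed class disjoint from `A` that is not
well-quasi-ordered. Otherwise some edgeless graph `K̄ₖ` lies in `A`. Contraction preserves the
number of connected components, so the graphs with exactly `k` components form a
contraction-closed class `F`; every member of `F` contracts onto `K̄ₖ`, so `F ∩ A ⊆ {K̄ₖ}`.
But `F` is not well-quasi-ordered: the cocktail-party graphs plus `k - 1` isolated vertices form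
an infinite antichain in it, because a proper contraction of a cocktail-party graph merges an
edge, and the merged vertex dominates every non-isolated vertex.
-/

namespace SimpleGraph.Walk

variable {V β : Type*} {G : SimpleGraph V}

lemma apply_eq_of_forall_adj (f : V → β) (h : ∀ v w, G.Adj v w → f v = f w) {u v : V}
    (p : G.Walk u v) : f u = f v := by
  induction p with
  | nil => rfl
  | cons hadj _ ih => exact (h _ _ hadj).trans ih

end SimpleGraph.Walk

namespace IsContractionModel

variable {V W : Type*} {G : SimpleGraph V} {H : SimpleGraph W} {φ : W → Set V}

noncomputable def owner (hm : IsContractionModel G H φ) (v : V) : W :=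
  (hm.2.1 v).exists.choose

lemma owner_mem (hm : IsContractionModel G H φ) (v : V) : v ∈ φ (hm.owner v) :=
  (hm.2.1 v).exists.choose_spec

lemma owner_eq (hm : IsContractionModel G H φ) {v : V} {w : W} (hv : v ∈ φ w) :
    hm.owner v = w :=
  (hm.2.1 v).unique (hm.owner_mem v) hv

noncomputable def pick (hm : IsContractionModel G H φ) (w : W) : V :=
  (hm.1 w).nonempty.some.val

lemma pick_mem (hm : IsContractionModel G H φ) (w : W) : hm.pick w ∈ φ w :=
  (hm.1 w).nonempty.some.property

lemma owner_pick (hm : IsContractionModel G H φ) (w : W) : hm.owner (hm.pick w) = w :=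
  hm.owner_eq (hm.pick_mem w)

lemma reachable_of_mem (hm : IsContractionModel G H φ) {w : W} {a b : V} (ha : a ∈ φ w)
    (hb : b ∈ φ w) : G.Reachable a b :=
  ((hm.1 w).preconnected ⟨a, ha⟩ ⟨b, hb⟩).map (Embedding.induce (φ w)).toHom

lemma reachable_of_adj (hm : IsContractionModel G H φ) {w w' : W} (hadj : H.Adj w w')
    {a b : V} (ha : a ∈ φ w) (hb : b ∈ φ w') : G.Reachable a b := by
  obtain ⟨c, hc, d, hd, hcd⟩ := (hm.2.2 w w' hadj.ne).mp hadj
  exact ((hm.reachable_of_mem ha hc).trans hcd.reachable).trans (hm.reachable_of_mem hd hb)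

lemma owner_reachable_of_adj (hm : IsContractionModel G H φ) {a b : V} (hab : G.Adj a b) :
    H.Reachable (hm.owner a) (hm.owner b) := by
  by_cases h : hm.owner a = hm.owner b
  · exact h ▸ Reachable.refl _
  · exact ((hm.2.2 _ _ h).mpr ⟨a, hm.owner_mem a, b, hm.owner_mem b, hab⟩).reachable

lemma exists_adj_of_not_subsingleton (hm : IsContractionModel G H φ) {w : W}
    (hw : ¬ (φ w).Subsingleton) : ∃ a ∈ φ w, ∃ b ∈ φ w, G.Adj a b := by
  obtain ⟨a, ha, b, hb, hab⟩ := Set.not_subsingleton_iff.mp hw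
  obtain ⟨p⟩ := (hm.1 w).preconnected ⟨a, ha⟩ ⟨b, hb⟩
  cases p with
  | nil => exact absurd rfl hab
  | cons hadj _ => exact ⟨a, ha, _, Subtype.mem _, hadj⟩

noncomputable def equivOfSubsingleton (hm : IsContractionModel G H φ)
    (h : ∀ w, (φ w).Subsingleton) : V ≃ W :=
  Equiv.ofBijective hm.owner
    ⟨fun a b hab => h _ (hm.owner_mem a) (hab ▸ hm.owner_mem b),
      fun w => ⟨hm.pick w, hm.owner_pick w⟩⟩

noncomputable def connectedComponentEquiv (hm : IsContractionModel G H φ) :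
    G.ConnectedComponent ≃ H.ConnectedComponent where
  toFun := ConnectedComponent.lift (fun v => H.connectedComponentMk (hm.owner v))
    fun _ _ p _ => p.apply_eq_of_forall_adj _ fun _ _ hab =>
      ConnectedComponent.sound (hm.owner_reachable_of_adj hab)
  invFun := ConnectedComponent.lift (fun w => G.connectedComponentMk (hm.pick w))
    fun _ _ p _ => p.apply_eq_of_forall_adj _ fun _ _ hadj =>
      ConnectedComponent.sound (hm.reachable_of_adj hadj (hm.pick_mem _) (hm.pick_mem _))
  left_inv := ConnectedComponent.ind fun v =>
    ConnectedComponent.sound (hm.reachable_of_mem (hm.pick_mem _) (hm.owner_mem v))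
  right_inv := ConnectedComponent.ind fun w => by
    simp only [ConnectedComponent.lift_mk, owner_pick]

lemma adj_of_dominating (hm : IsContractionModel G H φ) {w : W} {a b : V} (ha : a ∈ φ w)
    (hb : b ∈ φ w) (hdom : ∀ c d, G.Adj c d → G.Adj c a ∨ G.Adj c b) {w' t : W}
    (hne : w' ≠ w) (ht : H.Adj w' t) : H.Adj w' w := by
  obtain ⟨c, hc, d, -, hcd⟩ := (hm.2.2 w' t ht.ne).mp ht
  refine (hm.2.2 w' w hne).mpr ?_
  rcases hdom c d hcd with hca | hcb
  · exact ⟨c, hc, a, ha, hca⟩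
  · exact ⟨c, hc, b, hb, hcb⟩

end IsContractionModel

lemma isContraction_bot_of_equiv {V W : Type*} {G : SimpleGraph V}
    (e : W ≃ G.ConnectedComponent) : IsContraction (⊥ : SimpleGraph W) G := by
  refine ⟨fun w => (e w).supp, fun w => (e w).connected_toSimpleGraph, fun v => ?_,
    fun w w' hne => ?_⟩
  · refine ⟨e.symm (G.connectedComponentMk v), by simp [ConnectedComponent.mem_supp_iff], ?_⟩
    intro w hw
    rw [ConnectedComponent.mem_supp_iff] at hw
    simp [hw]
  · simp only [bot_adj, false_iff, ConnectedComponent.mem_supp_iff]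
    rintro ⟨a, ha, b, hb, hab⟩
    exact hne (e.injective (by rw [← ha, ← hb, ConnectedComponent.sound hab.reachable]))

noncomputable def connectedComponentEquivOption {V : Type*} {G : SimpleGraph V} {S : Set V}
    (hS : (G.induce S).Connected) (hiso : ∀ v ∉ S, ∀ w, ¬ G.Adj v w) :
    G.ConnectedComponent ≃ Option (Sᶜ : Set V) := by
  classical
  have hmem : ∀ v w, G.Adj v w → v ∈ S := fun v w hvw => by_contra fun hv => hiso v hv w hvw
  let s₀ := hS.nonempty.some
  let label : V → Option (Sᶜ : Set V) := fun v => if h : v ∈ S then none else some ⟨v, h⟩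
  exact
  { toFun := ConnectedComponent.lift label fun _ _ p _ => p.apply_eq_of_forall_adj label
      fun v w hvw => by simp [label, hmem v w hvw, hmem w v hvw.symm]
    invFun := fun o => o.elim (G.connectedComponentMk s₀) fun t => G.connectedComponentMk t
    left_inv := ConnectedComponent.ind fun v => by
      by_cases hv : v ∈ S
      · simp only [ConnectedComponent.lift_mk, label, dif_pos hv, Option.elim_none]
        exact ConnectedComponent.sound
          ((hS.preconnected s₀ ⟨v, hv⟩).map (Embedding.induce S).toHom)
      · simp [label, hv]
    right_inv := fun o => by
      cases o with
      | none => simp [label, s₀.2]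
      | some t => simp [label, show (t : V) ∉ S from t.2] }

/-- The cocktail-party graph on `2 * r` vertices, whose non-edges are the pairs `{2t, 2t + 1}`,
followed by `p` isolated vertices. -/
def cocktailPartyWithIsolated (r p : ℕ) : SimpleGraph (Fin (2 * r + p)) where
  Adj i j := (i : ℕ) / 2 ≠ (j : ℕ) / 2 ∧ (i : ℕ) < 2 * r ∧ (j : ℕ) < 2 * r
  symm := ⟨fun _ _ ⟨h, hi, hj⟩ => ⟨h.symm, hj, hi⟩⟩
  loopless := ⟨fun _ ⟨h, _⟩ => h rfl⟩

namespace cocktailPartyWithIsolated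

lemma adj_or_adj {r p : ℕ} {a b : Fin (2 * r + p)}
    (hab : (cocktailPartyWithIsolated r p).Adj a b) (c d : Fin (2 * r + p))
    (hcd : (cocktailPartyWithIsolated r p).Adj c d) :
    (cocktailPartyWithIsolated r p).Adj c a ∨ (cocktailPartyWithIsolated r p).Adj c b := by
  simp only [cocktailPartyWithIsolated] at *
  omega

lemma exists_nonisolated_not_adj {s p : ℕ} (hs : 2 ≤ s) (w : Fin (2 * s + p)) :
    ∃ w', w' ≠ w ∧ ¬ (cocktailPartyWithIsolated s p).Adj w' w ∧
      ∃ t, (cocktailPartyWithIsolated s p).Adj w' t := by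
  simp only [cocktailPartyWithIsolated, ne_eq, Fin.ext_iff]
  by_cases hw : (w : ℕ) < 2 * s
  -- the partner of `w` in its pair `{2t, 2t + 1}`, or any cocktail-party vertex if `w` is isolated
  · refine ⟨⟨2 * (w / 2) + (1 - w % 2), by omega⟩, by simp; omega, by simp; omega,
      ⟨if (w : ℕ) / 2 = 0 then 2 else 0, by split <;> omega⟩, ?_⟩
    split <;> simp <;> omega
  · exact ⟨⟨0, by omega⟩, by simp; omega, by simp; omega, ⟨2, by omega⟩, by simp; omega⟩

lemma connected_induce {r p : ℕ} (hr : 2 ≤ r) :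
    ((cocktailPartyWithIsolated r p).induce
      {i : Fin (2 * r + p) | (i : ℕ) < 2 * r}).Connected := by
  set S : Set (Fin (2 * r + p)) := {i | (i : ℕ) < 2 * r}
  have reachable : ∀ i j : S, (i.1 : ℕ) / 2 ≠ (j.1 : ℕ) / 2 →
      ((cocktailPartyWithIsolated r p).induce S).Reachable i j :=
    fun i j hij => Adj.reachable ⟨hij, i.2, j.2⟩
  let v₀ : S := ⟨⟨0, by omega⟩, by simp [S]; omega⟩
  let v₂ : S := ⟨⟨2, by omega⟩, by simp [S]; omega⟩
  rw [connected_iff_exists_forall_reachable]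
  refine ⟨v₀, fun v => ?_⟩
  by_cases hv : (v.1 : ℕ) / 2 = 0
  · exact (reachable v₀ v₂ (by simp [v₀, v₂])).trans (reachable v₂ v (by simp [v₂]; omega))
  · exact reachable v₀ v (by simp [v₀]; omega)

lemma card_connectedComponent {r p : ℕ} (hr : 2 ≤ r) :
    Nat.card (cocktailPartyWithIsolated r p).ConnectedComponent = p + 1 := by
  rw [Nat.card_congr (connectedComponentEquivOption (connected_induce hr) fun v hv w h =>
    hv h.2.1), Finite.card_option, Nat.card_eq_fintype_card, Fintype.card_compl_set,
    Fintype.card_fin, ← Set.toFinset_card]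
  simp [Fin.card_filter_val_lt]

theorem not_isContraction {r s p : ℕ} (hs : 2 ≤ s) (hsr : s < r) :
    ¬ IsContraction (cocktailPartyWithIsolated s p) (cocktailPartyWithIsolated r p) := by
  rintro ⟨φ, hm⟩
  by_cases hsub : ∀ w, (φ w).Subsingleton
  · have := Fin.equiv_iff_eq.mp ⟨hm.equivOfSubsingleton hsub⟩
    omega
  simp only [not_forall] at hsub
  obtain ⟨w, hw⟩ := hsub
  obtain ⟨a, ha, b, hb, hab⟩ := hm.exists_adj_of_not_subsingleton hw
  obtain ⟨w', hne, hnadj, t, ht⟩ := exists_nonisolated_not_adj hs w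
  exact hnadj (hm.adj_of_dominating ha hb (adj_or_adj hab) hne ht)

end cocktailPartyWithIsolated

namespace FinGraph

def edgeless (n : ℕ) : FinGraph := ⟨n, ⊥⟩

noncomputable def numComponents (X : FinGraph) : ℕ := Nat.card X.2.ConnectedComponent

lemma numComponents_eq_of_contr {H G : FinGraph} (h : H.Contr G) :
    H.numComponents = G.numComponents :=
  have ⟨_, hm⟩ := h
  (Nat.card_congr hm.connectedComponentEquiv).symm

lemma edgeless_numComponents_contr (X : FinGraph) : (edgeless X.numComponents).Contr X :=
  isContraction_bot_of_equiv (Finite.equivFinOfCardEq rfl).symm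

lemma eq_edgeless_of_contr {H : FinGraph} {n : ℕ} (h : H.Contr (edgeless n)) :
    H = edgeless n := by
  obtain ⟨m, H⟩ := H
  obtain ⟨φ, hm⟩ := h
  have hsub : ∀ w, (φ w).Subsingleton := fun w => by_contra fun hw => by
    obtain ⟨_, _, _, _, hab⟩ := hm.exists_adj_of_not_subsingleton hw
    exact hab
  obtain rfl : m = n := Fin.equiv_iff_eq.mp ⟨(hm.equivOfSubsingleton hsub).symm⟩
  obtain rfl : H = ⊥ := by
    ext a b
    refine iff_of_false (fun hab => ?_) id
    obtain ⟨_, _, _, _, h⟩ := (hm.2.2 a b hab.ne).mp hab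
    exact h
  rfl

end FinGraph

/-- Under the contraction relation, the class of all finite graphs has
no canonical antichain: there is no antichain `A` such that, for every
contraction-closed class `F` of graphs, `F ∩ A` is finite if and only if `F` is
well-quasi-ordered by the contraction relation. -/
theorem no_canonical_antichain :
    ¬ ∃ A : Set FinGraph, ContrAntichain A ∧
      ∀ F : Set FinGraph, ContrClosed F → ((F ∩ A).Finite ↔ WqoByContraction F) := by
  rintro ⟨A, hA, hcanon⟩
  set sizes : Set ℕ := {n | FinGraph.edgeless n ∈ A}
  by_cases hfin : sizesᶜ.Finite
  · obtain ⟨k, hk, hk0⟩ := (compl_compl sizes ▸ hfin.infinite_compl).exists_gt 0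
    obtain ⟨p, rfl⟩ := Nat.exists_eq_add_one.mpr hk0
    let F : Set FinGraph := {X | X.numComponents = p + 1}
    have hF : ContrClosed F := fun X hX Y hYX => (FinGraph.numComponents_eq_of_contr hYX).trans hX
    have hFA : F ∩ A ⊆ {FinGraph.edgeless (p + 1)} := fun X ⟨hX, hXA⟩ => by_contra fun hne =>
      hA _ hk X hXA (Ne.symm hne) (hX ▸ FinGraph.edgeless_numComponents_contr X)
    obtain ⟨i, j, hij, hC⟩ := (hcanon F hF).mp ((Set.finite_singleton _).subset hFA)
      (fun n => ⟨_, cocktailPartyWithIsolated (n + 2) p⟩)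
      (fun n => cocktailPartyWithIsolated.card_connectedComponent (by omega))
    exact cocktailPartyWithIsolated.not_isContraction (by omega) (by omega) hC
  · let F : Set FinGraph := FinGraph.edgeless '' sizesᶜ
    have hF : ContrClosed F := by
      rintro _ ⟨n, hn, rfl⟩ H hH
      exact ⟨n, hn, (FinGraph.eq_edgeless_of_contr hH).symm⟩
    have hFA : F ∩ A = ∅ := Set.eq_empty_of_forall_notMem fun _ ⟨⟨_, hn, hX⟩, hXA⟩ =>
      hn (hX.symm ▸ hXA : FinGraph.edgeless _ ∈ A)
    let e := Set.Infinite.natEmbedding _ hfin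
    obtain ⟨i, j, hij, hC⟩ := (hcanon F hF).mp (hFA ▸ Set.finite_empty)
      (fun n => FinGraph.edgeless (e n)) (fun n => ⟨e n, (e n).2, rfl⟩)
    exact hij.ne (e.injective (Subtype.ext (congrArg Sigma.fst (FinGraph.eq_edgeless_of_contr hC))))
end

section
/- Let H and G be graphs each having a dominating vertex. Then H is a contraction of G if and only if H is an induced minor of G. -/
open SimpleGraph

/-- An induced minor model of `H` in `G`: pairwise disjoint connected branch sets (not
necessarily covering all of `G`), with distinct vertices of `H` adjacent iff the
corresponding branch sets are joined by an edge of `G`. -/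
def IsInducedMinorModel {V W : Type*} (G : SimpleGraph V) (H : SimpleGraph W)
    (φ : W → Set V) : Prop :=
  (∀ w : W, (G.induce (φ w)).Connected) ∧
  (∀ w w' : W, w ≠ w' → Disjoint (φ w) (φ w')) ∧
  ∀ w w' : W, w ≠ w' →
    (H.Adj w w' ↔ ∃ a ∈ φ w, ∃ b ∈ φ w', G.Adj a b)

/-- `H` is an induced minor of `G`: `H` can be obtained from `G` by vertex deletions and
edge contractions; equivalently, there is an induced minor model of `H` in `G`. -/
def IsInducedMinor {V W : Type*} (H : SimpleGraph W) (G : SimpleGraph V) : Prop :=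
  ∃ φ : W → Set V, IsInducedMinorModel G H φ

/-!
A contraction model is an induced minor model whose branch sets cover `G`. Conversely, take an
induced minor model and a dominating vertex `v` of `G`. If `v` lies in a branch set, the vertex of
`H` it represents is dominating; otherwise take any dominating vertex of `H`. Enlarging the branch
set of that vertex by all uncovered vertices of `G`, `v` among them, gives a contraction model: the
enlarged set is connected because `v` dominates it, and the only new adjacencies in `G` are between
it and the other branch sets, whose vertices in `H` were adjacent to it already.
-/

theorem SimpleGraph.induce_connected_of_forall_adj {V : Type*} {G : SimpleGraph V} {s : Set V}
    {v : V} (hv : v ∈ s) (hadj : ∀ u ∈ s, u ≠ v → G.Adj v u) : (G.induce s).Connected := by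
  rw [connected_iff_exists_forall_reachable]
  refine ⟨⟨v, hv⟩, fun ⟨u, hu⟩ => ?_⟩
  by_cases huv : u = v
  · subst huv; rfl
  · exact Adj.reachable (by simpa using hadj u hu huv)

section

variable {V W : Type*} {G : SimpleGraph V} {H : SimpleGraph W} {φ : W → Set V}

theorem IsContractionModel.isInducedMinorModel (hφ : IsContractionModel G H φ) :
    IsInducedMinorModel G H φ := by
  obtain ⟨hconn, hcover, hadj⟩ := hφ
  refine ⟨hconn, fun w w' hne => Set.disjoint_left.mpr fun v hv hv' => hne ?_, hadj⟩
  exact (hcover v).unique hv hv'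

theorem IsContraction.isInducedMinor (h : IsContraction H G) : IsInducedMinor H G :=
  let ⟨φ, hφ⟩ := h
  ⟨φ, hφ.isInducedMinorModel⟩

def absorbRest [DecidableEq W] (φ : W → Set V) (w : W) : W → Set V :=
  Function.update φ w {v | ∀ u, u ≠ w → v ∉ φ u}

section absorbRest

variable [DecidableEq W]

@[simp]
theorem absorbRest_self (φ : W → Set V) (w : W) :
    absorbRest φ w w = {v | ∀ u, u ≠ w → v ∉ φ u} :=
  Function.update_self ..

@[simp]
theorem absorbRest_of_ne (φ : W → Set V) {w u : W} (hu : u ≠ w) : absorbRest φ w u = φ u :=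
  Function.update_of_ne hu ..

theorem existsUnique_mem_absorbRest (hdisj : ∀ u u', u ≠ u' → Disjoint (φ u) (φ u'))
    (w : W) (v : V) : ∃! u, v ∈ absorbRest φ w u := by
  by_cases hv : ∃ u, u ≠ w ∧ v ∈ φ u
  · obtain ⟨u, huw, hvu⟩ := hv
    refine ⟨u, show v ∈ absorbRest φ w u by rwa [absorbRest_of_ne φ huw],
      fun u' (hvu' : v ∈ absorbRest φ w u') => ?_⟩
    by_cases hu' : u' = w
    · subst hu'
      rw [absorbRest_self] at hvu'
      exact absurd hvu (hvu' u huw)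
    · rw [absorbRest_of_ne φ hu'] at hvu'
      by_contra hne
      exact Set.disjoint_left.mp (hdisj u' u hne) hvu' hvu
  · push Not at hv
    refine ⟨w, by simpa using hv, fun u (hvu : v ∈ absorbRest φ w u) => ?_⟩
    by_contra huw
    rw [absorbRest_of_ne φ huw] at hvu
    exact hv u huw hvu

end absorbRest

namespace IsInducedMinorModel

variable (hφ : IsInducedMinorModel G H φ)
include hφ

theorem nonempty (w : W) : (φ w).Nonempty :=
  Set.nonempty_coe_sort.mp (hφ.1 w).nonempty

theorem adj_of_dominating_mem {v : V} (hv : ∀ u, u ≠ v → G.Adj v u) {w : W} (hvw : v ∈ φ w)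
    {w' : W} (hne : w ≠ w') : H.Adj w w' := by
  obtain ⟨b, hb⟩ := hφ.nonempty w'
  have hbv : b ≠ v := by
    rintro rfl
    exact Set.disjoint_left.mp (hφ.2.1 w w' hne) hvw hb
  exact (hφ.2.2 w w' hne).mpr ⟨v, hvw, b, hb, hv b hbv⟩

theorem exists_dominating_forall_ne_not_mem (hH : ∃ w, ∀ u, u ≠ w → H.Adj w u) {v : V}
    (hv : ∀ u, u ≠ v → G.Adj v u) :
    ∃ w, (∀ u, u ≠ w → H.Adj w u) ∧ ∀ u, u ≠ w → v ∉ φ u := by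
  by_cases hcov : ∃ w, v ∈ φ w
  · obtain ⟨w, hvw⟩ := hcov
    refine ⟨w, fun u hu => hφ.adj_of_dominating_mem hv hvw (Ne.symm hu), fun u hu hvu => ?_⟩
    exact Set.disjoint_left.mp (hφ.2.1 u w hu) hvu hvw
  · push Not at hcov
    obtain ⟨w, hw⟩ := hH
    exact ⟨w, hw, fun u _ => hcov u⟩

theorem isContractionModel_absorbRest [DecidableEq W] {w : W} (hw : ∀ u, u ≠ w → H.Adj w u)
    {v : V} (hv : ∀ u, u ≠ v → G.Adj v u) (hvw : ∀ u, u ≠ w → v ∉ φ u) :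
    IsContractionModel G H (absorbRest φ w) := by
  have hv_mem : v ∈ absorbRest φ w w := by simpa using hvw
  have hjoin : ∀ u, u ≠ w → ∃ a ∈ absorbRest φ w w, ∃ b ∈ absorbRest φ w u, G.Adj a b := by
    intro u hu
    obtain ⟨b, hb⟩ := hφ.nonempty u
    refine ⟨v, hv_mem, b, by rwa [absorbRest_of_ne φ hu], hv b ?_⟩
    rintro rfl
    exact hvw u hu hb
  refine ⟨fun u => ?_, existsUnique_mem_absorbRest hφ.2.1 w, fun u u' hne => ?_⟩
  · by_cases hu : u = w
    · subst hu
      exact induce_connected_of_forall_adj hv_mem fun x _ hx => hv x hx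
    · rw [absorbRest_of_ne φ hu]
      exact hφ.1 u
  · by_cases hu : u = w
    · subst hu
      exact iff_of_true (hw u' hne.symm) (hjoin u' hne.symm)
    by_cases hu' : u' = w
    · subst hu'
      obtain ⟨a, ha, b, hb, hab⟩ := hjoin u hne
      exact iff_of_true (hw u hne).symm ⟨b, hb, a, ha, hab.symm⟩
    rw [absorbRest_of_ne φ hu, absorbRest_of_ne φ hu']
    exact hφ.2.2 u u' hne

end IsInducedMinorModel

end

theorem contraction_iff_inducedMinor_of_dominating_general
    {V W : Type*} (H : SimpleGraph W) (G : SimpleGraph V)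
    (hH : ∃ v : W, ∀ u : W, u ≠ v → H.Adj v u)
    (hG : ∃ v : V, ∀ u : V, u ≠ v → G.Adj v u) :
    IsContraction H G ↔ IsInducedMinor H G := by
  classical
  refine ⟨IsContraction.isInducedMinor, fun ⟨φ, hφ⟩ => ?_⟩
  obtain ⟨v, hv⟩ := hG
  obtain ⟨w, hw, hvw⟩ := hφ.exists_dominating_forall_ne_not_mem hH hv
  exact ⟨absorbRest φ w, hφ.isContractionModel_absorbRest hw hv hvw⟩

/-- Let `H` and `G` be graphs each having a dominating vertex. Then
`H` is a contraction of `G` if and only if `H` is an induced minor of `G`. -/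
theorem contraction_iff_inducedMinor_of_dominating
    {V W : Type*} [Fintype V] [Fintype W] (H : SimpleGraph W) (G : SimpleGraph V)
    (hH : ∃ v : W, ∀ u : W, u ≠ v → H.Adj v u)
    (hG : ∃ v : V, ∀ u : V, u ≠ v → G.Adj v u) :
    IsContraction H G ↔ IsInducedMinor H G :=
  contraction_iff_inducedMinor_of_dominating_general H G hH hG
end
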